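/- Fix d ≥ 2. As n → ∞, the non-absorption probability of a symmetric random walk in ℝ^d from Theorem B (type B_n) satisfies (2/(2^n n!)) (B(n, d−1) + B(n, d−3) + ⋯) ~ (log n)^{d−1} / (2^{d−2} (d−1)! √(π n)), where the sum runs over k = d−1, d−3, … with k ≥ 0, and a_n ~ b_n means a_n / b_n → 1. -/

import Mathlib

open Finset Filter

/-- The `B`-analogues of the unsigned Stirling numbers of the first kind:
coefficients of `(t+1)(t+3)⋯(t+2n−1)`. -/
noncomputable def Bcoef (n k : ℕ) : ℕ :=
  (∏ i ∈ Finset.range n, (Polynomial.X + Polynomial.C (2 * i + 1))).coeff k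

noncomputable def xx (i : ℕ) : ℝ := 1 / (2 * i + 1)

noncomputable def EE : ℕ → ℕ → ℝ
  | 0, 0 => 1
  | 0, _+1 => 0
  | _+1, 0 => 1
  | n+1, k+1 => EE n (k+1) + xx n * EE n k

noncomputable def SS (n : ℕ) : ℝ := ∑ i ∈ Finset.range n, xx i

noncomputable def DD (n : ℕ) : ℝ := ∏ i ∈ Finset.range n, (2 * i + 1 : ℝ)


lemma xx_pos (i : ℕ) : 0 < xx i := by unfold xx; positivity

lemma xx_le_one (i : ℕ) : xx i ≤ 1 := by
  unfold xx
  rw [div_le_one (by positivity)]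
  have : (0:ℝ) ≤ (i:ℝ) := Nat.cast_nonneg i
  linarith

lemma DD_pos (n : ℕ) : 0 < DD n := by unfold DD; positivity

lemma EE_zero (n : ℕ) : EE n 0 = 1 := by cases n <;> rfl

lemma EE_nonneg (n k : ℕ) : 0 ≤ EE n k := by
  induction n generalizing k with
  | zero => cases k with
    | zero => norm_num [EE]
    | succ k => norm_num [EE]
  | succ n ih =>
    cases k with
    | zero => norm_num [EE]
    | succ k =>
      show 0 ≤ EE n (k+1) + xx n * EE n k
      have := ih (k+1); have := ih k; have := (xx_pos n).le
      positivity

lemma Bcoef_succ (n k : ℕ) :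
    Bcoef (n+1) (k+1) = Bcoef n k + (2*n+1) * Bcoef n (k+1) := by
  unfold Bcoef
  rw [Finset.prod_range_succ, mul_add, Polynomial.coeff_add, Polynomial.coeff_mul_X,
    Polynomial.coeff_mul_C, mul_comm]

lemma Bcoef_succ_zero (n : ℕ) : Bcoef (n+1) 0 = (2*n+1) * Bcoef n 0 := by
  unfold Bcoef
  rw [Finset.prod_range_succ, mul_add, Polynomial.coeff_add, Polynomial.mul_coeff_zero,
    Polynomial.coeff_X_zero, mul_zero, zero_add, Polynomial.coeff_mul_C, mul_comm]

lemma Bcoef_zero (k : ℕ) : Bcoef 0 k = if k = 0 then 1 else 0 := by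
  unfold Bcoef; simp [Polynomial.coeff_one]

lemma xx_mul (n : ℕ) : xx n * (2 * n + 1 : ℝ) = 1 := by
  unfold xx
  field_simp

lemma bcoef_eq (n k : ℕ) : (Bcoef n k : ℝ) = EE n k * DD n := by
  induction n generalizing k with
  | zero =>
    cases k with
    | zero => simp [Bcoef_zero, EE, DD]
    | succ k => simp [Bcoef_zero, EE, DD]
  | succ n ih =>
    have hD : DD (n+1) = DD n * (2 * n + 1) := by
      unfold DD; rw [Finset.prod_range_succ]
    have h1 : ∀ y : ℝ, xx n * y * (DD n * (2*(n:ℝ)+1)) = y * DD n := by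
      intro y
      have h := xx_mul n
      calc xx n * y * (DD n * (2*(n:ℝ)+1)) = (xx n * (2*(n:ℝ)+1)) * (y * DD n) := by ring
        _ = y * DD n := by rw [h, one_mul]
    cases k with
    | zero =>
      rw [Bcoef_succ_zero, EE_zero]
      push_cast
      rw [ih 0, EE_zero, hD]
      ring
    | succ k =>
      rw [Bcoef_succ]
      push_cast
      rw [ih k, ih (k+1)]
      show _ = (EE n (k+1) + xx n * EE n k) * DD (n+1)
      rw [hD]
      linear_combination (-(EE n k * DD n)) * xx_mul n

lemma pow_lb (k : ℕ) (a b : ℝ) (ha : 0 ≤ a) (hb : 0 ≤ b) :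
    a^(k+1) + (k+1)*b*a^k ≤ (a+b)^(k+1) := by
  induction k with
  | zero => simp
  | succ k ih =>
    push_cast at ih ⊢
    have expand : (a+b)*(a^(k+1) + ((k:ℝ)+1)*b*a^k)
        = a^(k+2) + ((k:ℝ)+2)*b*a^(k+1) + ((k:ℝ)+1)*b^2*a^k := by ring
    have hpos : 0 ≤ ((k:ℝ)+1)*b^2*a^k := by positivity
    have step : (a+b)*(a^(k+1) + ((k:ℝ)+1)*b*a^k) ≤ (a+b)^(k+2) := by
      have := mul_le_mul_of_nonneg_left ih (by linarith : (0:ℝ) ≤ a+b)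
      calc (a+b)*(a^(k+1) + ((k:ℝ)+1)*b*a^k) ≤ (a+b)*(a+b)^(k+1) := this
        _ = (a+b)^(k+2) := by ring
    calc a^(k+1+1) + ((k:ℝ)+1+1)*b*a^(k+1)
        ≤ (a+b)*(a^(k+1) + ((k:ℝ)+1)*b*a^k) := by rw [expand]; push_cast; linarith
      _ ≤ (a+b)^(k+1+1) := by rw [show k+1+1 = k+2 from rfl] at *; exact step

lemma pow_ub (m : ℕ) (a b : ℝ) (ha : 1 ≤ a) (hb : 0 ≤ b) (hb1 : b ≤ 1) :
    (a+b)^(m+2) ≤ a^(m+2) + ((m:ℝ)+2)*b*a^(m+1) + 4^(m+2)*b^2*a^m := by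
  have ha0 : (0:ℝ) ≤ a := by linarith
  induction m with
  | zero => norm_num; nlinarith
  | succ m ih =>
    have key : (a+b)^(m+3) ≤ (a+b) * (a^(m+2) + ((m:ℝ)+2)*b*a^(m+1) + 4^(m+2)*b^2*a^m) := by
      rw [show m+3 = (m+2)+1 from rfl, pow_succ, mul_comm]
      exact mul_le_mul_of_nonneg_left ih (by linarith)
    have e2' : b * (b^2 * a^m) ≤ a * (b^2 * a^m) :=
      mul_le_mul_of_nonneg_right (hb1.trans ha) (by positivity)
    have c1 : (4:ℝ)^(m+2) * (b*(b^2*a^m)) ≤ 4^(m+2) * (a * (b^2*a^m)) :=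
      mul_le_mul_of_nonneg_left e2' (by positivity)
    have hm4 : ((m:ℝ)+2) + 1 ≤ 4^(m+2) := by
      have h : (m+3 : ℕ) ≤ 4^(m+2) := Nat.lt_pow_self (n := m+2) (by norm_num : 1 < 4)
      have h' : ((m:ℝ)+3) ≤ 4^(m+2) := by exact_mod_cast h
      linarith
    have c2 : (((m:ℝ)+2) + 4^(m+2) + 4^(m+2)) * (b^2*a^(m+1)) ≤ (4^(m+3)) * (b^2*a^(m+1)) := by
      apply mul_le_mul_of_nonneg_right _ (by positivity)
      have e4 : (4:ℝ)^(m+3) = 4 * 4^(m+2) := by ring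
      nlinarith [pow_pos (by norm_num : (0:ℝ)<4) (m+2)]
    have expand : (a+b) * (a^(m+2) + ((m:ℝ)+2)*b*a^(m+1) + 4^(m+2)*b^2*a^m)
        = a^(m+3) + ((m:ℝ)+3)*b*a^(m+2) + ((m:ℝ)+2)*(b^2*a^(m+1))
          + 4^(m+2)*(b^2*a^(m+1)) + 4^(m+2)*(b*(b^2*a^m)) := by ring
    have e5 : a*(b^2*a^m) = b^2*a^(m+1) := by ring
    refine key.trans ?_
    push_cast
    nlinarith [c1, c2, expand, e5]

lemma SS_succ (n : ℕ) : SS (n+1) = SS n + xx n := Finset.sum_range_succ _ _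

lemma SS_nonneg (n : ℕ) : 0 ≤ SS n :=
  Finset.sum_nonneg fun i _ => (xx_pos i).le

lemma SS_one : SS 1 = 1 := by
  unfold SS xx
  norm_num

lemma SS_mono : Monotone SS := by
  apply monotone_nat_of_le_succ
  intro n
  rw [SS_succ]
  linarith [(xx_pos n).le, xx_pos n]

lemma SS_ge_one {n : ℕ} (hn : 1 ≤ n) : 1 ≤ SS n := SS_one ▸ SS_mono hn

lemma EE_ub (n k : ℕ) : (k.factorial : ℝ) * EE n k ≤ SS n ^ k := by
  induction n generalizing k with
  | zero =>
    cases k with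
    | zero => simp [EE, SS]
    | succ k => simp [EE, SS]
  | succ n ih =>
    cases k with
    | zero => simp [EE_zero]
    | succ k =>
      show ((k+1).factorial : ℝ) * (EE n (k+1) + xx n * EE n k) ≤ SS (n+1) ^ (k+1)
      rw [SS_succ]
      have h1 := ih (k+1)
      have h2 := ih k
      have hx := xx_pos n
      have hplb := pow_lb k (SS n) (xx n) (SS_nonneg n) hx.le
      have hfact : ((k+1).factorial : ℝ) = ((k:ℝ)+1) * k.factorial := by
        rw [Nat.factorial_succ]; push_cast; ring
      have h2' : ((k:ℝ)+1) * xx n * ((k.factorial : ℝ) * EE n k)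
          ≤ ((k:ℝ)+1) * xx n * SS n ^ k := by
        apply mul_le_mul_of_nonneg_left h2 (by positivity)
      calc ((k+1).factorial : ℝ) * (EE n (k+1) + xx n * EE n k)
          = ((k+1).factorial : ℝ) * EE n (k+1)
            + ((k:ℝ)+1) * xx n * ((k.factorial : ℝ) * EE n k) := by rw [hfact]; ring
        _ ≤ SS n ^ (k+1) + ((k:ℝ)+1) * xx n * SS n ^ k := by linarith
        _ ≤ (SS n + xx n) ^ (k+1) := by
            have : ((k:ℝ)+1) * xx n * SS n ^ k = ((k:ℕ)+1 : ℝ) * xx n * SS n ^ k := by push_cast; ring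
            rw [this]
            exact_mod_cast hplb

lemma EE_lb : ∀ k n : ℕ, 1 ≤ n →
    SS n ^ k - (k.factorial : ℝ) * 4^k * SS n ^ (k-1) ≤ (k.factorial : ℝ) * EE n k := by
  intro k
  induction k with
  | zero =>
    intro n hn
    simp [EE_zero]
  | succ k ihk =>
    intro n hn
    induction n, hn using Nat.le_induction with
    | base =>
      rw [SS_one]
      cases k with
      | zero =>
        show (1:ℝ)^1 - _ ≤ _
        have : EE 1 1 = 1 := by
          show EE 0 1 + xx 0 * EE 0 0 = 1
          norm_num [EE, xx]
        rw [this]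
        norm_num
      | succ k =>
        have hE : EE 1 (k+2) = 0 := by
          show EE 0 (k+2) + xx 0 * EE 0 (k+1) = 0
          norm_num [EE]
        rw [hE, mul_zero, one_pow, one_pow]
        have h4 : (1:ℝ) ≤ ((k+2).factorial : ℝ) * 4^(k+2) := by
          have hf : (1:ℝ) ≤ ((k+2).factorial : ℝ) := by
            exact_mod_cast Nat.one_le_iff_ne_zero.mpr (Nat.factorial_ne_zero _)
          have h42 : (1:ℝ) ≤ 4^(k+2) := one_le_pow₀ (by norm_num)
          nlinarith
        linarith
    | succ n hn ihn =>
      -- inductive step over n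
      set a := SS n with hSa
      set b := xx n with hxb
      have ha1 : 1 ≤ a := SS_ge_one hn
      have ha0 : (0:ℝ) ≤ a := by linarith
      have hb0 : (0:ℝ) < b := xx_pos n
      have hb1 : b ≤ 1 := xx_le_one n
      have hSn : SS (n+1) = a + b := SS_succ n
      rw [hSn]
      show _ ≤ ((k+1).factorial : ℝ) * (EE n (k+1) + xx n * EE n k)
      cases k with
      | zero =>
        norm_num [EE_zero] at ihn ⊢
        rw [← hxb]
        linarith
      | succ k =>
        -- K = k+2
        have hKform : (((k+2).factorial : ℕ) : ℝ) = ((k:ℝ)+2) * ((k+1).factorial : ℝ) := by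
          rw [Nat.factorial_succ]; push_cast; ring
        have ihk' := ihk n hn  -- (k+1)! EE n (k+1) ≥ a^{k+1} - (k+1)! 4^{k+1} a^k
        have ihn' := ihn        -- (k+2)! EE n (k+2) ≥ a^{k+2} - (k+2)! 4^{k+2} a^{k+1}
        simp only [Nat.add_sub_cancel] at ihk' ihn' ⊢
        have hub := pow_ub k a b ha1 hb0.le hb1
        have hlb' : a^(k+1) + b*a^k ≤ (a+b)^(k+1) := by
          have := pow_lb k a b ha0 hb0.le
          have hkb : b*a^k ≤ ((k:ℝ)+1)*b*a^k := by
            nlinarith [mul_nonneg hb0.le (pow_nonneg ha0 k), Nat.cast_nonneg (α := ℝ) k]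
          push_cast at this
          linarith
        -- multiply ihk' by (k+2)*b ≥ 0
        have hmul : ((k:ℝ)+2) * b * (a^(k+1) - ((k+1).factorial : ℝ) * 4^(k+1) * a^k)
            ≤ ((k:ℝ)+2) * b * (((k+1).factorial : ℝ) * EE n (k+1)) := by
          apply mul_le_mul_of_nonneg_left ihk' (by positivity)
        -- goal: (a+b)^{k+2} - (k+2)! 4^{k+2} (a+b)^{k+1} ≤ (k+2)! (EE n (k+2) + b EE n (k+1))
        have hc : (0:ℝ) ≤ ((k+2).factorial : ℝ) * 4^(k+2) := by positivity
        have hneg : - (((k+2).factorial : ℝ) * 4^(k+2)) * (a+b)^(k+1)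
            ≤ - (((k+2).factorial : ℝ) * 4^(k+2)) * (a^(k+1) + b*a^k) := by
          rw [neg_mul, neg_mul, neg_le_neg_iff]
          exact mul_le_mul_of_nonneg_left hlb' hc
        -- key coefficient inequality: 4^{k+2} b^2 a^k/(k+2)!... in multiplied form:
        -- need: 4^(k+2) b^2 a^k + (k+2) b (k+1)! 4^(k+1) a^k ≤ (k+2)! 4^(k+2) b a^k
        have hcoef : (4:ℝ)^(k+2) * b^2 * a^k
            + ((k:ℝ)+2) * b * (((k+1).factorial : ℝ) * 4^(k+1) * a^k)
            ≤ (((k+2).factorial : ℝ) * 4^(k+2)) * (b * a^k) := by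
          have hpk : (0:ℝ) ≤ b * a^k := by positivity
          have hb2 : b^2 ≤ b := by nlinarith
          have hfge : (2:ℝ) ≤ ((k+2).factorial : ℝ) := by
            exact_mod_cast Nat.le_of_dvd (Nat.factorial_pos _) (by
              exact Nat.dvd_factorial (by norm_num) (by omega))
          have h4pos : (0:ℝ) < 4^(k+1) := by positivity
          -- (k+2)*(k+1)! = (k+2)!; 4^{k+2} = 4*4^{k+1}
          have e1 : ((k:ℝ)+2) * ((k+1).factorial : ℝ) = ((k+2).factorial : ℝ) := by
            rw [hKform]
          have e2 : (4:ℝ)^(k+2) = 4 * 4^(k+1) := by ring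
          -- reduce to: 4*4^{k+1} b^2 + (k+2)! 4^{k+1} b ≤ (k+2)! * 4 * 4^{k+1} b
          -- i.e. 4 b^2 + (k+2)! b ≤ 4 (k+2)! b ; since b^2 ≤ b : 4b + F b ≤ 4F b ⇔ 4 + F ≤ 4F ⇔ true for F ≥ 2
          have hFb : (4:ℝ) * b^2 + ((k+2).factorial : ℝ) * b ≤ 4 * (((k+2).factorial : ℝ)) * b := by
            nlinarith [hb0.le, hfge, hb2]
          calc (4:ℝ)^(k+2) * b^2 * a^k + ((k:ℝ)+2) * b * (((k+1).factorial : ℝ) * 4^(k+1) * a^k)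
              = (4 * b^2 + ((k+2).factorial : ℝ) * b) * (4^(k+1) * a^k) := by
                rw [e2, ← e1]; ring
            _ ≤ (4 * (((k+2).factorial : ℝ)) * b) * (4^(k+1) * a^k) := by
                apply mul_le_mul_of_nonneg_right hFb (by positivity)
            _ = (((k+2).factorial : ℝ) * 4^(k+2)) * (b * a^k) := by rw [e2]; ring
        -- assemble
        have hubF : ((k+2).factorial : ℝ) * (EE n (k+2) + b * EE n (k+1))
            ≥ (a^(k+2) - ((k+2).factorial : ℝ) * 4^(k+2) * a^(k+1))
              + ((k:ℝ)+2) * b * (a^(k+1) - ((k+1).factorial : ℝ) * 4^(k+1) * a^k) := by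
          have expand : ((k+2).factorial : ℝ) * (EE n (k+2) + b * EE n (k+1))
              = ((k+2).factorial : ℝ) * EE n (k+2)
                + ((k:ℝ)+2) * b * (((k+1).factorial : ℝ) * EE n (k+1)) := by
            rw [hKform]; ring
          rw [expand]
          push_cast at ihn'
          linarith [hmul, ihn']
        have hfinal : (a+b)^(k+2) - ((k+2).factorial : ℝ) * 4^(k+2) * (a+b)^(k+1)
            ≤ (a^(k+2) - ((k+2).factorial : ℝ) * 4^(k+2) * a^(k+1))
              + ((k:ℝ)+2) * b * (a^(k+1) - ((k+1).factorial : ℝ) * 4^(k+1) * a^k) := by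
          ring_nf at hub hneg hcoef ⊢
          linarith
        show (a+b)^(k+2) - ((k+2).factorial : ℝ) * 4^(k+2) * (a+b)^(k+1)
            ≤ ((k+2).factorial : ℝ) * (EE n (k+2) + b * EE n (k+1))
        linarith [hfinal, hubF]

lemma log_le_two_SS (n : ℕ) : Real.log (2*n+1) ≤ 2 * SS n := by
  have tele : ∑ i ∈ Finset.range n,
      (Real.log (2*(i+1)+1) - Real.log (2*i+1)) = Real.log (2*n+1) - Real.log (2*0+1) := by
    have h := Finset.sum_range_sub (fun i => Real.log (2*(i:ℝ)+1)) n
    push_cast at h ⊢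
    exact h
  have hterm : ∀ i : ℕ, Real.log (2*(i+1)+1) - Real.log (2*i+1) ≤ 2 * xx i := by
    intro i
    have h1 : (0:ℝ) < 2*i+1 := by positivity
    have h2 : (0:ℝ) < 2*(i+1)+1 := by positivity
    rw [← Real.log_div h2.ne' h1.ne']
    have := Real.log_le_sub_one_of_pos (div_pos h2 h1)
    have heq : (2*((i:ℝ)+1)+1) / (2*(i:ℝ)+1) - 1 = 2 * xx i := by
      unfold xx
      field_simp
      ring
    calc Real.log ((2*((i:ℝ)+1)+1) / (2*i+1)) ≤ (2*((i:ℝ)+1)+1) / (2*i+1) - 1 := this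
      _ = 2 * xx i := heq
  calc Real.log (2*n+1) = Real.log (2*n+1) - Real.log (2*0+1) := by norm_num
    _ = ∑ i ∈ Finset.range n, (Real.log (2*(i+1)+1) - Real.log (2*i+1)) := tele.symm
    _ ≤ ∑ i ∈ Finset.range n, 2 * xx i := Finset.sum_le_sum (fun i _ => hterm i)
    _ = 2 * SS n := by unfold SS; rw [Finset.mul_sum]

lemma two_SS_le (m : ℕ) : 2 * SS (m+1) ≤ 2 + Real.log (2*(m+1)+1) := by
  have tele : ∑ i ∈ Finset.range m,
      (Real.log (2*(i+1)+1) - Real.log (2*i+1)) = Real.log (2*m+1) - Real.log (2*0+1) := by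
    have h := Finset.sum_range_sub (fun i => Real.log (2*(i:ℝ)+1)) m
    push_cast at h ⊢
    exact h
  have hterm : ∀ i : ℕ, 2 * xx (i+1) ≤ Real.log (2*(i+1)+1) - Real.log (2*i+1) := by
    intro i
    have h1 : (0:ℝ) < 2*i+1 := by positivity
    have h2 : (0:ℝ) < 2*(i+1)+1 := by positivity
    rw [← Real.log_div h2.ne' h1.ne']
    have := Real.one_sub_inv_le_log_of_pos (div_pos h2 h1)
    have heq : 1 - ((2*((i:ℝ)+1)+1) / (2*(i:ℝ)+1))⁻¹ = 2 * xx (i+1) := by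
      unfold xx
      rw [inv_div]
      push_cast
      field_simp
      ring
    linarith [this, heq.ge]
  have hsplit : SS (m+1) = (∑ i ∈ Finset.range m, xx (i+1)) + xx 0 :=
    Finset.sum_range_succ' xx m
  have hx0 : xx 0 = 1 := by norm_num [xx]
  have hsum : ∑ i ∈ Finset.range m, 2 * xx (i+1)
      ≤ Real.log (2*m+1) - Real.log (2*0+1) := by
    rw [← tele]
    exact Finset.sum_le_sum (fun i _ => hterm i)
  have hmono : Real.log (2*(m:ℝ)+1) ≤ Real.log (2*((m:ℝ)+1)+1) := by
    apply Real.log_le_log (by positivity)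
    linarith
  have : 2 * SS (m+1) = (∑ i ∈ Finset.range m, 2 * xx (i+1)) + 2 := by
    rw [hsplit, hx0, mul_add, Finset.mul_sum]
    norm_num
  rw [this]
  push_cast at hsum hmono ⊢
  norm_num at hsum
  linarith

lemma log_natcast_atTop : Filter.Tendsto (fun n:ℕ => Real.log n) atTop atTop :=
  Real.tendsto_log_atTop.comp tendsto_natCast_atTop_atTop

lemma SS_lim : Filter.Tendsto (fun n:ℕ => 2 * SS n / Real.log n) atTop (nhds 1) := by
  have hlog := log_natcast_atTop
  have hupper : Filter.Tendsto (fun n:ℕ => 1 + (2 + Real.log 3)/Real.log n) atTop (nhds (1+0)) :=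
    tendsto_const_nhds.add (tendsto_const_nhds.div_atTop hlog)
  rw [add_zero] at hupper
  apply tendsto_of_tendsto_of_tendsto_of_le_of_le' (tendsto_const_nhds : Filter.Tendsto (fun _:ℕ => (1:ℝ)) atTop (nhds 1)) hupper
  · filter_upwards [eventually_ge_atTop 2] with n hn
    have hn2 : (2:ℝ) ≤ (n:ℝ) := by exact_mod_cast hn
    have hlogn : 0 < Real.log n := Real.log_pos (by linarith)
    rw [le_div_iff₀ hlogn, one_mul]
    calc Real.log n ≤ Real.log (2*n+1) := by
          apply Real.log_le_log (by linarith)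
          linarith
      _ ≤ 2 * SS n := log_le_two_SS n
  · filter_upwards [eventually_ge_atTop 2] with n hn
    have hn2 : (2:ℝ) ≤ (n:ℝ) := by exact_mod_cast hn
    have hlogn : 0 < Real.log n := Real.log_pos (by linarith)
    rw [div_le_iff₀ hlogn]
    obtain ⟨m, rfl⟩ : ∃ m, n = m + 1 := ⟨n - 1, by omega⟩
    have h1 := two_SS_le m
    have h2 : Real.log (2*((m:ℝ)+1)+1) ≤ Real.log 3 + Real.log ((m:ℝ)+1) := by
      rw [← Real.log_mul (by norm_num) (by positivity)]
      apply Real.log_le_log (by positivity)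
      nlinarith [Nat.cast_nonneg (α := ℝ) m]
    push_cast at h1 hlogn ⊢
    have hexp : (1 + (2 + Real.log 3)/Real.log ((m:ℝ)+1)) * Real.log ((m:ℝ)+1)
        = Real.log ((m:ℝ)+1) + (2 + Real.log 3) := by
      field_simp
    rw [hexp]
    linarith

lemma DD_eq (n : ℕ) : DD n * (2^n * n.factorial) = ((2*n).factorial : ℝ) := by
  induction n with
  | zero => simp [DD]
  | succ n ih =>
    have hD : DD (n+1) = DD n * (2*n+1) := Finset.prod_range_succ _ _
    have h2 : 2*(n+1) = (2*n+1)+1 := by ring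
    rw [hD, h2]
    have hf : ((2*n+1)+1).factorial = ((2*n+1)+1) * ((2*n+1) * (2*n).factorial) := by
      rw [Nat.factorial_succ, Nat.factorial_succ]
    rw [hf, Nat.factorial_succ]
    push_cast
    linear_combination ((2*(n:ℝ)+1) * (2*((n:ℝ)+1))) * ih

lemma rr_eq (n : ℕ) (hn : 1 ≤ n) :
    DD n / (2^n * n.factorial) * Real.sqrt (Real.pi * n)
      = Real.sqrt Real.pi * Stirling.stirlingSeq (2*n) / (Stirling.stirlingSeq n)^2 := by
  have hnR : (0:ℝ) < n := by exact_mod_cast hn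
  have hfn : (0:ℝ) < (n.factorial : ℝ) := by exact_mod_cast n.factorial_pos
  have hf2n : (0:ℝ) < ((2*n).factorial : ℝ) := by exact_mod_cast (2*n).factorial_pos
  have hsq : Real.sqrt n * Real.sqrt n = n := Real.mul_self_sqrt hnR.le
  have hsqn : (0:ℝ) < Real.sqrt n := Real.sqrt_pos.mpr hnR
  have he : (0:ℝ) < Real.exp 1 := Real.exp_pos 1
  have hne : ((n:ℝ) / Real.exp 1) ^ n ≠ 0 := by positivity
  unfold Stirling.stirlingSeq
  push_cast
  have h4 : Real.sqrt (2 * (2*(n:ℝ))) = 2 * Real.sqrt n := by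
    rw [show 2 * (2*(n:ℝ)) = 4 * n by ring, show (4:ℝ) = 2^2 by norm_num,
      Real.sqrt_mul (by positivity), Real.sqrt_sq (by norm_num)]
  have h2n : ((2 * (n:ℝ)) / Real.exp 1) ^ (2*n) = (2:ℝ)^(2*n) * (((n:ℝ)/Real.exp 1) ^ n)^2 := by
    rw [show (2 * (n:ℝ)) / Real.exp 1 = 2 * ((n:ℝ)/Real.exp 1) by ring, mul_pow,
      mul_comm 2 n, pow_mul ((n:ℝ)/Real.exp 1), mul_comm n 2]
  have hpin : Real.sqrt (Real.pi * n) = Real.sqrt Real.pi * Real.sqrt n :=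
    Real.sqrt_mul Real.pi_nonneg _
  have hDD : DD n = ((2*n).factorial : ℝ) / (2^n * n.factorial) := by
    rw [← DD_eq n]
    field_simp
  have hs2n : (0:ℝ) < Real.sqrt (2*(n:ℝ)) := Real.sqrt_pos.mpr (by positivity)
  have hsq2 : Real.sqrt (2*(n:ℝ)) * Real.sqrt (2*(n:ℝ)) = 2*(n:ℝ) :=
    Real.mul_self_sqrt (by positivity)
  rw [hDD, hpin, h4, h2n]
  set q := ((n:ℝ)/Real.exp 1)^n with hq
  set s2 := Real.sqrt (2*(n:ℝ)) with hs2
  set sn := Real.sqrt (n:ℝ) with hsn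
  set F := (n.factorial : ℝ) with hF
  set G := ((2*n).factorial : ℝ) with hG
  have hqne : q ≠ 0 := hne
  field_simp
  ring_nf
  have e1 : sn^2 = (n:ℝ) := Real.sq_sqrt hnR.le
  have e2 : s2^2 = 2*(n:ℝ) := Real.sq_sqrt (by positivity)
  rw [e1, e2]
  ring

lemma rr_lim : Filter.Tendsto (fun n:ℕ => DD n / (2^n * n.factorial) * Real.sqrt (Real.pi * n))
    atTop (nhds 1) := by
  have hs := Stirling.tendsto_stirlingSeq_sqrt_pi
  have h2 : Filter.Tendsto (fun n:ℕ => Stirling.stirlingSeq (2*n)) atTop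
      (nhds (Real.sqrt Real.pi)) := hs.comp (tendsto_id.const_mul_atTop' two_pos)
  have hpi : (0:ℝ) < Real.pi := Real.pi_pos
  have hne : (Real.sqrt Real.pi)^2 ≠ 0 := by positivity
  have hlim : Filter.Tendsto
      (fun n:ℕ => Real.sqrt Real.pi * Stirling.stirlingSeq (2*n) / (Stirling.stirlingSeq n)^2)
      atTop (nhds (Real.sqrt Real.pi * Real.sqrt Real.pi / (Real.sqrt Real.pi)^2)) :=
    (tendsto_const_nhds.mul h2).div (hs.pow 2) hne
  have hval : Real.sqrt Real.pi * Real.sqrt Real.pi / (Real.sqrt Real.pi)^2 = 1 := by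
    rw [Real.sq_sqrt hpi.le, Real.mul_self_sqrt hpi.le]
    field_simp
  rw [hval] at hlim
  apply hlim.congr'
  filter_upwards [eventually_ge_atTop 1] with n hn
  exact (rr_eq n hn).symm

/-- For fixed `d ≥ 2`, the non-absorption probability of a symmetric random walk,
`(2/(2^n n!))(B(n,d−1) + B(n,d−3) + ⋯)` (sum over `k = d−1, d−3, …` with `k ≥ 0`), is
asymptotically equivalent to `(log n)^{d−1} / (2^{d−2} (d−1)! √(π n))` as `n → ∞`. -/
theorem walk_nonabsorption_asymptotics (d : ℕ) (hd : 2 ≤ d) :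
    Tendsto (fun n : ℕ =>
        (2 * (∑ j ∈ Finset.range ((d - 1) / 2 + 1),
          (Bcoef n (d - 1 - 2 * j) : ℝ)) / (2 ^ n * n.factorial))
        / ((Real.log n) ^ (d - 1)
            / (2 ^ (d - 2) * (d - 1).factorial * Real.sqrt (Real.pi * n))))
      atTop (nhds 1) := by
  obtain ⟨e', hee'⟩ : ∃ e', d - 1 = e' + 1 := ⟨d - 2, by omega⟩
  set e := d - 1 with he
  set m := (d - 1) / 2 with hm
  set C : ℝ := (e.factorial : ℝ) * 4^e + (m:ℝ) * e.factorial with hC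
  have hfe : (0:ℝ) < (e.factorial : ℝ) := by exact_mod_cast e.factorial_pos
  have hCpos : 0 < C := by positivity
  have he2 : e = e' + 1 := hee'
  -- bounds on the normalized sum
  have sum_lb : ∀ n : ℕ, 1 ≤ n →
      SS n ^ e - C * SS n ^ e' ≤ (∑ j ∈ Finset.range (m+1), EE n (e - 2*j)) * e.factorial := by
    intro n hn
    have hS1 : 1 ≤ SS n := SS_ge_one hn
    have hsplit : ∑ j ∈ Finset.range (m+1), EE n (e - 2*j)
        = (∑ j ∈ Finset.range m, EE n (e - 2*(j+1))) + EE n (e - 2*0) := by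
      exact Finset.sum_range_succ' (fun j => EE n (e - 2*j)) m
    have h1 := EE_lb e n hn
    have he1 : e - 1 = e' := by omega
    rw [he1] at h1
    have h2 : 0 ≤ (∑ j ∈ Finset.range m, EE n (e - 2*(j+1))) * (e.factorial : ℝ) :=
      mul_nonneg (Finset.sum_nonneg fun j _ => EE_nonneg n _) hfe.le
    have h3 : (0:ℝ) ≤ (m:ℝ) * e.factorial * SS n ^ e' := by positivity
    have hCexp : C * SS n ^ e' = (e.factorial:ℝ)*4^e*SS n ^ e' + (m:ℝ)*e.factorial*SS n ^ e' := by
      rw [hC]; ring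
    have expand : (∑ j ∈ Finset.range (m+1), EE n (e - 2*j)) * (e.factorial : ℝ)
        = (∑ j ∈ Finset.range m, EE n (e - 2*(j+1))) * (e.factorial : ℝ)
          + (e.factorial : ℝ) * EE n (e - 2*0) := by rw [hsplit]; ring
    have hz : e - 2*0 = e := by omega
    rw [hz] at expand
    linarith
  have sum_ub : ∀ n : ℕ, 1 ≤ n →
      (∑ j ∈ Finset.range (m+1), EE n (e - 2*j)) * e.factorial ≤ SS n ^ e + C * SS n ^ e' := by
    intro n hn
    have hS1 : 1 ≤ SS n := SS_ge_one hn
    have hsplit : ∑ j ∈ Finset.range (m+1), EE n (e - 2*j)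
        = (∑ j ∈ Finset.range m, EE n (e - 2*(j+1))) + EE n (e - 2*0) := by
      exact Finset.sum_range_succ' (fun j => EE n (e - 2*j)) m
    have hmain : EE n (e - 2*0) * (e.factorial : ℝ) ≤ SS n ^ e := by
      have := EE_ub n e
      norm_num [mul_comm]
      linarith
    have hterm : ∀ j : ℕ, EE n (e - 2*(j+1)) ≤ SS n ^ e' := by
      intro j
      set k := e - 2*(j+1) with hk
      have h4 := EE_ub n k
      have h5 : EE n k ≤ (k.factorial : ℝ) * EE n k := by
        apply le_mul_of_one_le_left (EE_nonneg n k)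
        exact_mod_cast Nat.one_le_iff_ne_zero.mpr (Nat.factorial_ne_zero k)
      have h6 : SS n ^ k ≤ SS n ^ e' := pow_le_pow_right₀ hS1 (by omega)
      linarith
    have hsum' : (∑ j ∈ Finset.range m, EE n (e - 2*(j+1))) ≤ (m:ℝ) * SS n ^ e' := by
      calc (∑ j ∈ Finset.range m, EE n (e - 2*(j+1)))
          ≤ ∑ _j ∈ Finset.range m, SS n ^ e' := Finset.sum_le_sum fun j _ => hterm j
        _ = (m:ℝ) * SS n ^ e' := by rw [Finset.sum_const, Finset.card_range, nsmul_eq_mul]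
    have hCexp : C * SS n ^ e' = (e.factorial:ℝ)*4^e*SS n ^ e' + (m:ℝ)*e.factorial*SS n ^ e' := by
      rw [hC]; ring
    have expand : (∑ j ∈ Finset.range (m+1), EE n (e - 2*j)) * (e.factorial : ℝ)
        = (∑ j ∈ Finset.range m, EE n (e - 2*(j+1))) * (e.factorial : ℝ)
          + EE n (e - 2*0) * (e.factorial : ℝ) := by rw [hsplit]; ring
    have h7 : (∑ j ∈ Finset.range m, EE n (e - 2*(j+1))) * (e.factorial:ℝ)
        ≤ (m:ℝ) * SS n ^ e' * e.factorial :=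
      mul_le_mul_of_nonneg_right hsum' hfe.le
    have h8 : (0:ℝ) ≤ (e.factorial:ℝ)*4^e*SS n ^ e' := by positivity
    linarith
  -- SS tends to infinity
  have SS_atTop : Tendsto SS atTop atTop := by
    apply tendsto_atTop_mono' atTop
      (show (fun n:ℕ => Real.log n / 2) ≤ᶠ[atTop] SS by
        filter_upwards [eventually_ge_atTop 1] with n hn
        have hn1 : (1:ℝ) ≤ (n:ℝ) := by exact_mod_cast hn
        have := log_le_two_SS n
        have hmono : Real.log n ≤ Real.log (2*n+1) := by
          apply Real.log_le_log (by linarith)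
          linarith
        linarith)
    exact (log_natcast_atTop).atTop_div_const (by norm_num)
  have hc0 : Tendsto (fun n:ℕ => C / SS n) atTop (nhds 0) :=
    tendsto_const_nhds.div_atTop SS_atTop
  have hlo : Tendsto (fun n:ℕ => 1 - C / SS n) atTop (nhds 1) := by
    have := (tendsto_const_nhds : Tendsto (fun _:ℕ => (1:ℝ)) atTop (nhds 1)).sub hc0
    simpa using this
  have hup : Tendsto (fun n:ℕ => 1 + C / SS n) atTop (nhds 1) := by
    have := (tendsto_const_nhds : Tendsto (fun _:ℕ => (1:ℝ)) atTop (nhds 1)).add hc0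
    simpa using this
  have A_lim : Tendsto (fun n:ℕ =>
      (∑ j ∈ Finset.range (m+1), EE n (e - 2*j)) * (e.factorial:ℝ) / SS n ^ e)
      atTop (nhds 1) := by
    apply tendsto_of_tendsto_of_tendsto_of_le_of_le' hlo hup
    · filter_upwards [eventually_ge_atTop 1] with n hn
      have hS1 : 1 ≤ SS n := SS_ge_one hn
      have hS0 : 0 < SS n := lt_of_lt_of_le one_pos hS1
      have hSe : 0 < SS n ^ e := by positivity
      rw [le_div_iff₀ hSe]
      have hpow : SS n ^ e = SS n ^ e' * SS n := by rw [he2, pow_succ]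
      have hid : (1 - C/SS n) * SS n ^ e = SS n ^ e - C * SS n ^ e' := by
        rw [hpow]; field_simp
      rw [hid]
      exact sum_lb n hn
    · filter_upwards [eventually_ge_atTop 1] with n hn
      have hS1 : 1 ≤ SS n := SS_ge_one hn
      have hS0 : 0 < SS n := lt_of_lt_of_le one_pos hS1
      have hSe : 0 < SS n ^ e := by positivity
      rw [div_le_iff₀ hSe]
      have hpow : SS n ^ e = SS n ^ e' * SS n := by rw [he2, pow_succ]
      have hid : (1 + C/SS n) * SS n ^ e = SS n ^ e + C * SS n ^ e' := by
        rw [hpow]; field_simp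
      rw [hid]
      exact sum_ub n hn
  have B_lim : Tendsto (fun n:ℕ =>
      (2 * SS n / Real.log n)^e * (DD n / (2^n * n.factorial) * Real.sqrt (Real.pi * n)))
      atTop (nhds 1) := by
    have := (SS_lim.pow e).mul rr_lim
    simpa using this
  have main := A_lim.mul B_lim
  rw [mul_one] at main
  apply main.congr'
  filter_upwards [eventually_ge_atTop 2] with n hn
  have hn1 : 1 ≤ n := by omega
  have hS1 : 1 ≤ SS n := SS_ge_one hn1
  have hS0 : 0 < SS n := lt_of_lt_of_le one_pos hS1
  have hnR : (2:ℝ) ≤ (n:ℝ) := by exact_mod_cast hn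
  have hL : 0 < Real.log n := Real.log_pos (by linarith)
  have hD := DD_pos n
  have hnpos : (0:ℝ) < (n:ℝ) := by linarith
  have hsq : 0 < Real.sqrt (Real.pi * n) := Real.sqrt_pos.mpr (by positivity)
  have hfn : (0:ℝ) < (n.factorial : ℝ) := by exact_mod_cast n.factorial_pos
  have h2p : (0:ℝ) < 2^n := by positivity
  have hsum : ∑ j ∈ Finset.range (m+1), (Bcoef n (e - 2*j) : ℝ)
      = (∑ j ∈ Finset.range (m+1), EE n (e - 2*j)) * DD n := by
    rw [Finset.sum_mul]
    exact Finset.sum_congr rfl fun j _ => bcoef_eq n _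
  have hd2 : d - 2 = e' := by omega
  rw [hd2, hsum]
  rw [he2]
  rw [div_pow, mul_pow]
  field_simp
  ring
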